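/- Let η denote the Minkowski bilinear form η((x₁,t₁),(x₂,t₂)) = x₁x₂ - t₁t₂ on ℝ². Let F : U → ℝ² be a C² diffeomorphism on an open subset U of ℝ², with components (X,T), such that the pullback of η under F equals λ·η for a positive function λ on U (i.e., F is a Minkowski-conformal transformation). Then both X and T satisfy the wave equation: X_xx - X_tt = 0 and T_xx - T_tt = 0 on U. -/

import Mathlib

/-- The Minkowski bilinear form η((x₁,t₁),(x₂,t₂)) = x₁x₂ - t₁t₂ on ℝ². -/
def minkEta (a b : ℝ × ℝ) : ℝ := a.1 * b.1 - a.2 * b.2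

/-- Partial derivative in the first coordinate (x). -/
noncomputable def pdx (φ : ℝ × ℝ → ℝ) (p : ℝ × ℝ) : ℝ :=
  deriv (fun s => φ (s, p.2)) p.1

/-- Partial derivative in the second coordinate (t). -/
noncomputable def pdt (φ : ℝ × ℝ → ℝ) (p : ℝ × ℝ) : ℝ :=
  deriv (fun s => φ (p.1, s)) p.2

/-- The d'Alembertian ∂²/∂x² - ∂²/∂t². -/
noncomputable def dAlembert (φ : ℝ × ℝ → ℝ) (p : ℝ × ℝ) : ℝ :=
  pdx (pdx φ) p - pdt (pdt φ) p

/-!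
In the null directions n₊ = (1, 1), n₋ = (1, -1) the d'Alembertian is a mixed second derivative:
`F_xx - F_tt = D²F(n₊, n₋)` by symmetry of `D²F`. Conformality makes `DF` map null vectors to
null vectors, so `η(DF n, DF n) = 0` on `U` for `n = n₊, n₋`; differentiating along the other null
direction gives `η(F_xx - F_tt, DF n₊) = η(F_xx - F_tt, DF n₋) = 0`. As `λ ≠ 0`, `DF` is
invertible, and nondegeneracy of `η` forces `F_xx - F_tt = 0`.
-/

open Topology

theorem minkEta_comm (a b : ℝ × ℝ) : minkEta a b = minkEta b a := by
  unfold minkEta; ring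

theorem HasDerivAt.minkEta {f g : ℝ → ℝ × ℝ} {f' g' : ℝ × ℝ} {s : ℝ}
    (hf : HasDerivAt f f' s) (hg : HasDerivAt g g' s) :
    HasDerivAt (fun s => minkEta (f s) (g s)) (minkEta f' (g s) + minkEta (f s) g') s := by
  have fst {h : ℝ → ℝ × ℝ} {h'} (hh : HasDerivAt h h' s) : HasDerivAt (fun s => (h s).1) h'.1 s :=
    (ContinuousLinearMap.fst ℝ ℝ ℝ).hasFDerivAt.comp_hasDerivAt s hh
  have snd {h : ℝ → ℝ × ℝ} {h'} (hh : HasDerivAt h h' s) : HasDerivAt (fun s => (h s).2) h'.2 s :=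
    (ContinuousLinearMap.snd ℝ ℝ ℝ).hasFDerivAt.comp_hasDerivAt s hh
  have h := ((fst hf).mul (fst hg)).sub ((snd hf).mul (snd hg))
  exact h.congr_deriv (by simp only [_root_.minkEta]; ring)

theorem eq_zero_of_minkEta_null {v : ℝ × ℝ}
    (hplus : minkEta v (1, 1) = 0) (hminus : minkEta v (1, -1) = 0) : v = 0 := by
  simp only [minkEta] at hplus hminus
  ext <;> simp only [Prod.fst_zero, Prod.snd_zero] <;> linarith

theorem eq_zero_of_minkEta_conformal_null {L : ℝ × ℝ →L[ℝ] ℝ × ℝ} {lam : ℝ} (hlam : lam ≠ 0)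
    (hL : ∀ w₁ w₂, minkEta (L w₁) (L w₂) = lam * minkEta w₁ w₂) {W : ℝ × ℝ}
    (hplus : minkEta W (L (1, 1)) = 0) (hminus : minkEta W (L (1, -1)) = 0) : W = 0 := by
  have hinj : Function.Injective L := by
    refine (injective_iff_map_eq_zero L).2 fun v hv => eq_zero_of_minkEta_null ?_ ?_
    all_goals
      refine (mul_eq_zero.1 ?_).resolve_left hlam
      rw [← hL, hv]
      simp [minkEta]
  obtain ⟨v, rfl⟩ := (LinearMap.injective_iff_surjective (f := (L : ℝ × ℝ →ₗ[ℝ] ℝ × ℝ))).1 hinj W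
  suffices v = 0 by simp [this]
  refine eq_zero_of_minkEta_null ?_ ?_
  · exact (mul_eq_zero.1 ((hL _ _).symm.trans hplus)).resolve_left hlam
  · exact (mul_eq_zero.1 ((hL _ _).symm.trans hminus)).resolve_left hlam

theorem ContDiffOn.hasDerivAt_fderiv_comp_apply {E G : Type*} [NormedAddCommGroup E]
    [NormedSpace ℝ E] [NormedAddCommGroup G] [NormedSpace ℝ G] {f : E → G} {U : Set E} {p : E}
    (hf : ContDiffOn ℝ 2 f U) (hU : IsOpen U) (hp : p ∈ U) {c : ℝ → E} {u : E} {s : ℝ}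
    (hc : HasDerivAt c u s) (hcs : c s = p) (a : E) :
    HasDerivAt (fun s => fderiv ℝ f (c s) a) (fderiv ℝ (fderiv ℝ f) p u a) s := by
  have hdiff : DifferentiableAt ℝ (fderiv ℝ f) p :=
    ((hf.fderiv_of_isOpen hU (by norm_num)).differentiableOn one_ne_zero).differentiableAt
      (hU.mem_nhds hp)
  have happly : HasFDerivAt (fun q => fderiv ℝ f q a) ((fderiv ℝ (fderiv ℝ f) p).flip a) p := by
    simpa using hdiff.hasFDerivAt.clm_apply (hasFDerivAt_const a p)
  subst hcs
  exact happly.comp_hasDerivAt s hc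

theorem ContDiffOn.minkEta_fderiv_fderiv_eq_zero {F : ℝ × ℝ → ℝ × ℝ} {U : Set (ℝ × ℝ)}
    (hF : ContDiffOn ℝ 2 F U) (hU : IsOpen U) {a : ℝ × ℝ}
    (hnull : ∀ q ∈ U, minkEta (fderiv ℝ F q a) (fderiv ℝ F q a) = 0) {p : ℝ × ℝ} (hp : p ∈ U)
    (u : ℝ × ℝ) : minkEta (fderiv ℝ (fderiv ℝ F) p u a) (fderiv ℝ F p a) = 0 := by
  have hline : HasDerivAt (fun s : ℝ => p + s • u) u 0 := by
    simpa using ((hasDerivAt_id (0 : ℝ)).smul_const u).const_add p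
  have hderiv := hF.hasDerivAt_fderiv_comp_apply hU hp hline (by simp) a
  have hzero : HasDerivAt
      (fun s : ℝ => minkEta (fderiv ℝ F (p + s • u) a) (fderiv ℝ F (p + s • u) a)) 0 0 := by
    refine (hasDerivAt_const (0 : ℝ) (0 : ℝ)).congr_of_eventuallyEq ?_
    have hmem : ∀ᶠ s in 𝓝 (0 : ℝ), p + s • u ∈ U :=
      hline.continuousAt.preimage_mem_nhds (by simpa using hU.mem_nhds hp)
    filter_upwards [hmem] with s hs using hnull _ hs
  have := (hderiv.minkEta hderiv).unique hzero
  simp only [zero_smul, add_zero, minkEta_comm (fderiv ℝ F p a)] at this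
  linarith

section DAlembertian

variable {G : Type*} [NormedAddCommGroup G] [NormedSpace ℝ G] {f : ℝ × ℝ → G}
  {U : Set (ℝ × ℝ)} {p : ℝ × ℝ}

theorem hasDerivAt_prodMk_right (x y : ℝ) : HasDerivAt (fun s : ℝ => (s, y)) (1, 0) x :=
  (hasDerivAt_id x).prodMk (hasDerivAt_const x y)

theorem hasDerivAt_prodMk_left (x y : ℝ) : HasDerivAt (fun s : ℝ => (x, s)) (0, 1) y :=
  (hasDerivAt_const y x).prodMk (hasDerivAt_id y)

theorem pdx_clm_comp (ℓ : G →L[ℝ] ℝ) (hf : DifferentiableAt ℝ f p) :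
    pdx (fun q => ℓ (f q)) p = ℓ (fderiv ℝ f p (1, 0)) :=
  (ℓ.hasFDerivAt.comp_hasDerivAt p.1
    (hf.hasFDerivAt.comp_hasDerivAt p.1 (hasDerivAt_prodMk_right p.1 p.2))).deriv

theorem pdt_clm_comp (ℓ : G →L[ℝ] ℝ) (hf : DifferentiableAt ℝ f p) :
    pdt (fun q => ℓ (f q)) p = ℓ (fderiv ℝ f p (0, 1)) :=
  (ℓ.hasFDerivAt.comp_hasDerivAt p.2
    (hf.hasFDerivAt.comp_hasDerivAt p.2 (hasDerivAt_prodMk_left p.1 p.2))).deriv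

theorem ContDiffOn.pdx_pdx_clm_comp (hf : ContDiffOn ℝ 2 f U) (hU : IsOpen U) (hp : p ∈ U)
    (ℓ : G →L[ℝ] ℝ) :
    pdx (pdx fun q => ℓ (f q)) p = ℓ (fderiv ℝ (fderiv ℝ f) p (1, 0) (1, 0)) := by
  have hline := hasDerivAt_prodMk_right p.1 p.2
  refine ((ℓ.hasFDerivAt.comp_hasDerivAt p.1
    (hf.hasDerivAt_fderiv_comp_apply hU hp hline rfl (1, 0))).congr_of_eventuallyEq ?_).deriv
  filter_upwards [hline.continuousAt.preimage_mem_nhds (hU.mem_nhds hp)] with s hs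
  exact pdx_clm_comp ℓ ((hf.differentiableOn (by norm_num)).differentiableAt (hU.mem_nhds hs))

theorem ContDiffOn.pdt_pdt_clm_comp (hf : ContDiffOn ℝ 2 f U) (hU : IsOpen U) (hp : p ∈ U)
    (ℓ : G →L[ℝ] ℝ) :
    pdt (pdt fun q => ℓ (f q)) p = ℓ (fderiv ℝ (fderiv ℝ f) p (0, 1) (0, 1)) := by
  have hline := hasDerivAt_prodMk_left p.1 p.2
  refine ((ℓ.hasFDerivAt.comp_hasDerivAt p.2
    (hf.hasDerivAt_fderiv_comp_apply hU hp hline rfl (0, 1))).congr_of_eventuallyEq ?_).deriv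
  filter_upwards [hline.continuousAt.preimage_mem_nhds (hU.mem_nhds hp)] with s hs
  exact pdt_clm_comp ℓ ((hf.differentiableOn (by norm_num)).differentiableAt (hU.mem_nhds hs))

theorem ContDiffOn.dAlembert_clm_comp (hf : ContDiffOn ℝ 2 f U) (hU : IsOpen U) (hp : p ∈ U)
    (ℓ : G →L[ℝ] ℝ) :
    dAlembert (fun q => ℓ (f q)) p =
      ℓ (fderiv ℝ (fderiv ℝ f) p (1, 0) (1, 0) - fderiv ℝ (fderiv ℝ f) p (0, 1) (0, 1)) := by
  rw [dAlembert, hf.pdx_pdx_clm_comp hU hp, hf.pdt_pdt_clm_comp hU hp, map_sub]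

theorem IsSymmSndFDerivAt.fderiv_fderiv_null_eq_sub (hf : IsSymmSndFDerivAt ℝ f p) :
    fderiv ℝ (fderiv ℝ f) p (1, 1) (1, -1) =
      fderiv ℝ (fderiv ℝ f) p (1, 0) (1, 0) - fderiv ℝ (fderiv ℝ f) p (0, 1) (0, 1) := by
  have hplus : ((1, 1) : ℝ × ℝ) = (1, 0) + (0, 1) := by simp
  have hminus : ((1, -1) : ℝ × ℝ) = (1, 0) - (0, 1) := by simp
  simp only [hplus, hminus, map_add, map_sub, _root_.add_apply]
  rw [hf (0, 1) (1, 0)]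
  abel

end DAlembertian

theorem minkowski_conformal_components_wave_general
    (U : Set (ℝ × ℝ)) (hU : IsOpen U)
    (F : ℝ × ℝ → ℝ × ℝ)
    (hF : ContDiffOn ℝ 2 F U)
    (lam : ℝ × ℝ → ℝ) (hlam : ∀ p ∈ U, 0 < lam p)
    (hconf : ∀ p ∈ U, ∀ w₁ w₂ : ℝ × ℝ,
      minkEta (fderiv ℝ F p w₁) (fderiv ℝ F p w₂) = lam p * minkEta w₁ w₂) :
    ∀ p ∈ U, dAlembert (fun q => (F q).1) p = 0 ∧ dAlembert (fun q => (F q).2) p = 0 := by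
  intro p hp
  have hsymm : IsSymmSndFDerivAt ℝ F p :=
    (hF.contDiffAt (hU.mem_nhds hp)).isSymmSndFDerivAt (by simp)
  have hnull {n : ℝ × ℝ} (hn : minkEta n n = 0) (q : ℝ × ℝ) (hq : q ∈ U) :
      minkEta (fderiv ℝ F q n) (fderiv ℝ F q n) = 0 := by
    rw [hconf q hq, hn, mul_zero]
  have hwave :
      fderiv ℝ (fderiv ℝ F) p (1, 0) (1, 0) - fderiv ℝ (fderiv ℝ F) p (0, 1) (0, 1) = 0 := by
    refine eq_zero_of_minkEta_conformal_null (hlam p hp).ne' (hconf p hp) ?_ ?_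
    · rw [← hsymm.fderiv_fderiv_null_eq_sub, hsymm]
      exact hF.minkEta_fderiv_fderiv_eq_zero hU (hnull (by norm_num [minkEta])) hp _
    · rw [← hsymm.fderiv_fderiv_null_eq_sub]
      exact hF.minkEta_fderiv_fderiv_eq_zero hU (hnull (by norm_num [minkEta])) hp _
  constructor
  · simpa [hwave] using hF.dAlembert_clm_comp hU hp (ContinuousLinearMap.fst ℝ ℝ ℝ)
  · simpa [hwave] using hF.dAlembert_clm_comp hU hp (ContinuousLinearMap.snd ℝ ℝ ℝ)

/-- a Minkowski-conformal C² diffeomorphism `F = (X,T)` has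
components satisfying the wave equation on `U`. -/
theorem minkowski_conformal_components_wave
    (U : Set (ℝ × ℝ)) (hU : IsOpen U)
    (F : ℝ × ℝ → ℝ × ℝ)
    (hF : ContDiffOn ℝ 2 F U)
    (hInj : Set.InjOn F U)
    (hOpen : IsOpen (F '' U))
    (hInv : ∃ G : ℝ × ℝ → ℝ × ℝ, ContDiffOn ℝ 2 G (F '' U) ∧ ∀ p ∈ U, G (F p) = p)
    (lam : ℝ × ℝ → ℝ) (hlam : ∀ p ∈ U, 0 < lam p)
    (hconf : ∀ p ∈ U, ∀ w₁ w₂ : ℝ × ℝ,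
      minkEta (fderiv ℝ F p w₁) (fderiv ℝ F p w₂) = lam p * minkEta w₁ w₂) :
    ∀ p ∈ U, dAlembert (fun q => (F q).1) p = 0 ∧ dAlembert (fun q => (F q).2) p = 0 :=
  minkowski_conformal_components_wave_general U hU F hF lam hlam hconf
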